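/- In a finite semidistributive lattice L, the collection of downward label sets equals the collection of upward label sets: { D_J(x) : x ∈ L } = { U_J(y) : y ∈ L }, where labels are the join-irreducibles γ_J of cover relations; hence rowmotion sending x to the unique y with D_J(x) = U_J(y) is well defined. -/

import Mathlib

/-!
Both `D_J` and `U_J` are injective: `a` is the join of `D_J(a)`, and by meet-semidistributivity
`U_J(u) ⊆ U_J(v)` forces `v ≤ u`. It therefore suffices to find, for every `a`, some `b` with
`U_J(b) = D_J(a)`; since `L` is finite, `a ↦ b` is then a bijection. For a label `j ∈ D_J(a)`
of the cover `w_j ⋖ a`, every element strictly below `j` lies below `w_j`, and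
meet-semidistributivity makes `{x | j ⊓ x = j ⊓ w_j}` join-closed, so it has a greatest element
`κ(j)`. The element `b = ⋀ κ(D_J(a))` works: each `j ∈ D_J(a)` lies below `κ(j')` for the other
labels `j'`, which makes `b ⋖ b ⊔ j` a cover labelled `j`, and every cover of `b` arises this way.
-/

/-- `D_J(a)`: the set of join-irreducible labels `γ_J(w ⋖ a)` of covers below
`a`, where `γ_J(w ⋖ a)` is the minimal element `j` with `w ⊔ j = a`. -/
def downJLabels {L : Type*} [Lattice L] (a : L) : Set L :=
  {jj | ∃ w, w ⋖ a ∧ IsLeast {z : L | w ⊔ z = a} jj}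

/-- `U_J(a)`: the set of join-irreducible labels `γ_J(a ⋖ z)` of covers above
`a`. -/
def upJLabels {L : Type*} [Lattice L] (a : L) : Set L :=
  {jj | ∃ z', a ⋖ z' ∧ IsLeast {z : L | a ⊔ z = z'} jj}

def JoinSemidistrib (L : Type*) [Lattice L] : Prop :=
  ∀ x y z : L, x ⊔ y = x ⊔ z → x ⊔ (y ⊓ z) = x ⊔ y

def MeetSemidistrib (L : Type*) [Lattice L] : Prop :=
  ∀ x y z : L, x ⊓ y = x ⊓ z → x ⊓ (y ⊔ z) = x ⊓ y

theorem Set.Finite.exists_isGreatest_of_sup_mem {α : Type*} [SemilatticeSup α] {S : Set α}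
    (hS : S.Finite) (hne : S.Nonempty) (hsup : ∀ x ∈ S, ∀ y ∈ S, x ⊔ y ∈ S) :
    ∃ m, IsGreatest S m :=
  ⟨hS.toFinset.sup' (by simpa using hne) id,
    Finset.sup'_mem S hsup _ _ id (by simp),
    fun _ hy => Finset.le_sup' id (by simpa using hy)⟩

theorem Set.Finite.exists_isLeast_of_inf_mem {α : Type*} [SemilatticeInf α] {S : Set α}
    (hS : S.Finite) (hne : S.Nonempty) (hinf : ∀ x ∈ S, ∀ y ∈ S, x ⊓ y ∈ S) :
    ∃ m, IsLeast S m :=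
  Set.Finite.exists_isGreatest_of_sup_mem (α := αᵒᵈ) hS hne hinf

theorem Finite.exists_isGLB {L : Type*} [Lattice L] [Finite L] [Nonempty L] (S : Set L) :
    ∃ b, IsGLB S b := by
  have := Fintype.ofFinite L
  let := Fintype.toCompleteLatticeOfNonempty L
  exact ⟨sInf S, isGLB_sInf S⟩

section Labels

variable {L : Type*} [Lattice L] {w a j u v b c : L}

theorem IsLeast.not_le_of_sup_eq (hj : IsLeast {z | w ⊔ z = a} j) (h : w < a) : ¬ j ≤ w :=
  fun hjw => h.ne ((sup_eq_left.2 hjw).symm.trans hj.1)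

theorem IsLeast.le_of_lt_of_sup_eq (hj : IsLeast {z | w ⊔ z = a} j) (h : w ⋖ a) (hu : u < j) :
    u ≤ w := by
  have hua : w ⊔ u ≤ a := sup_le h.le (hu.le.trans (le_sup_right.trans hj.1.le))
  rcases h.eq_or_eq le_sup_left hua with hw | ha
  · exact le_sup_right.trans hw.le
  · exact absurd (hj.2 ha) hu.not_ge

theorem inf_eq_inf_of_forall_lt_le (hv : ∀ u < j, u ≤ v) (hc : j ⊓ v ≤ c)
    (hjc : ¬ j ≤ c) : j ⊓ c = j ⊓ v :=
  le_antisymm (le_inf inf_le_left (hv _ (inf_lt_left.2 hjc))) (le_inf inf_le_left hc)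

theorem isLeast_sup_eq_sup_self (hSD : JoinSemidistrib L) (hv : ∀ u < j, u ≤ v)
    (hb : j ⊓ v ≤ b) (hjb : ¬ j ≤ b) : IsLeast {z | b ⊔ z = b ⊔ j} j := by
  refine ⟨rfl, fun z hz => ?_⟩
  by_contra hjz
  have hzj : z ⊓ j ≤ b := (le_inf inf_le_right (hv _ (inf_lt_right.2 hjz))).trans hb
  have hbj : b = b ⊔ j := by
    calc b = b ⊔ (z ⊓ j) := (sup_eq_left.2 hzj).symm
      _ = b ⊔ z := hSD b z j hz
      _ = b ⊔ j := hz
  exact hjb (le_sup_right.trans hbj.ge)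

end Labels

section Finite

variable {L : Type*} [Lattice L] [Finite L]

theorem exists_isLeast_sup_eq (hSD : JoinSemidistrib L) (w z₀ : L) :
    ∃ j, IsLeast {z | w ⊔ z = w ⊔ z₀} j :=
  (Set.toFinite _).exists_isLeast_of_inf_mem ⟨z₀, rfl⟩
    fun x hx y hy => (hSD w x y (hx.trans hy.symm)).trans hx

theorem CovBy.exists_isLeast_sup_eq (hSD : JoinSemidistrib L) {w a : L} (h : w ⋖ a) :
    ∃ j, IsLeast {z | w ⊔ z = a} j := by
  simpa only [sup_eq_right.2 h.le] using _root_.exists_isLeast_sup_eq hSD w a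

theorem exists_isGreatest_inf_eq (hSD : MeetSemidistrib L) (j x₀ : L) :
    ∃ m, IsGreatest {x | j ⊓ x = j ⊓ x₀} m :=
  (Set.toFinite _).exists_isGreatest_of_sup_mem ⟨x₀, rfl⟩
    fun x hx y hy => (hSD j x y (hx.trans hy.symm)).trans hx

theorem isLUB_downJLabels (hSD : JoinSemidistrib L) (a : L) : IsLUB (downJLabels a) a := by
  refine ⟨fun j ⟨_, _, hj⟩ => le_sup_right.trans hj.1.le, fun t ht => ?_⟩
  by_contra hat
  obtain ⟨w, haw, hw⟩ := exists_le_covBy_of_lt (inf_lt_left.2 hat)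
  obtain ⟨j, hj⟩ := hw.exists_isLeast_sup_eq hSD
  have hja : j ≤ a := le_sup_right.trans hj.1.le
  exact hj.not_le_of_sup_eq hw.lt ((le_inf hja (ht ⟨w, hw, hj⟩)).trans haw)

theorem le_of_downJLabels_subset (hSD : JoinSemidistrib L) {u v : L}
    (h : downJLabels u ⊆ downJLabels v) : u ≤ v :=
  (isLUB_downJLabels hSD u).2 fun _ hj => (isLUB_downJLabels hSD v).1 (h hj)

theorem downJLabels_injective (hSD : JoinSemidistrib L) :
    Function.Injective (downJLabels (L := L)) := fun _ _ h =>
  le_antisymm (le_of_downJLabels_subset hSD h.subset) (le_of_downJLabels_subset hSD h.symm.subset)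

/-- A label `j ∈ U_J(u) ⊆ U_J(v)` of a cover `u ⋖ z ≤ u ⊔ v` would satisfy
`j ⊓ u = j ⊓ v`, hence `j ⊓ (u ⊔ v) = j ⊓ u < j` by meet-semidistributivity. -/
theorem le_of_upJLabels_subset (hSD₁ : JoinSemidistrib L) (hSD₂ : MeetSemidistrib L) {u v : L}
    (h : upJLabels u ⊆ upJLabels v) : v ≤ u := by
  by_contra hvu
  obtain ⟨z, hz, hzuv⟩ := exists_covBy_le_of_lt (left_lt_sup.2 hvu)
  obtain ⟨j, hj⟩ := hz.exists_isLeast_sup_eq hSD₁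
  obtain ⟨z', hz', hj'⟩ := h ⟨z, hz, hj⟩
  have hju : ¬ j ≤ u := hj.not_le_of_sup_eq hz.lt
  have hjv : ¬ j ≤ v := hj'.not_le_of_sup_eq hz'.lt
  have hjuv : j ⊓ u = j ⊓ v := le_antisymm
    (le_inf inf_le_left (hj'.le_of_lt_of_sup_eq hz' (inf_lt_left.2 hju)))
    (le_inf inf_le_left (hj.le_of_lt_of_sup_eq hz (inf_lt_left.2 hjv)))
  have hj_le : j ≤ u ⊔ v := (le_sup_right.trans hj.1.le).trans hzuv
  exact hju (inf_eq_left.1 ((hSD₂ j u v hjuv).symm.trans (inf_eq_left.2 hj_le)))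

theorem upJLabels_injective (hSD₁ : JoinSemidistrib L) (hSD₂ : MeetSemidistrib L) :
    Function.Injective (upJLabels (L := L)) := fun _ _ h =>
  le_antisymm (le_of_upJLabels_subset hSD₁ hSD₂ h.symm.subset)
    (le_of_upJLabels_subset hSD₁ hSD₂ h.subset)

end Finite

section Rowmotion

variable {L : Type*} [Lattice L]

theorem upJLabels_eq_of_isGLB (hSD : JoinSemidistrib L) {D : Set L} {w κ : L → L} {b : L}
    (hlt : ∀ j ∈ D, ∀ u < j, u ≤ w j) (hnle : ∀ j ∈ D, ¬ j ≤ w j)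
    (hsep : ∀ j ∈ D, ∀ j' ∈ D, j ≠ j' → j ≤ w j')
    (hκ : ∀ j ∈ D, IsGreatest {x | j ⊓ x = j ⊓ w j} (κ j)) (hb : IsGLB (κ '' D) b) :
    upJLabels b = D := by
  have hwκ : ∀ j ∈ D, w j ≤ κ j := fun j hj => (hκ j hj).2 rfl
  have hb_le : ∀ j ∈ D, b ≤ κ j := fun j hj => hb.1 ⟨j, hj, rfl⟩
  have hle_b : ∀ j ∈ D, j ⊓ w j ≤ b := by
    refine fun j hj => hb.2 ?_
    rintro _ ⟨j', hj', rfl⟩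
    obtain rfl | hne := eq_or_ne j j'
    · exact inf_le_right.trans (hwκ j hj)
    · exact inf_le_left.trans ((hsep j hj j' hj' hne).trans (hwκ j' hj'))
  have hle_κ : ∀ j ∈ D, ∀ c, j ⊓ w j ≤ c → ¬ j ≤ c → c ≤ κ j :=
    fun j hj c hc hjc => (hκ j hj).2 (inf_eq_inf_of_forall_lt_le (hlt j hj) hc hjc)
  have hnle_b : ∀ j ∈ D, ¬ j ≤ b := fun j hj hjb => hnle j hj <|
    calc j ≤ j ⊓ κ j := le_inf le_rfl (hjb.trans (hb_le j hj))
      _ = j ⊓ w j := (hκ j hj).1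
      _ ≤ w j := inf_le_right
  have hlabel : ∀ j ∈ D, IsLeast {z | b ⊔ z = b ⊔ j} j := fun j hj =>
    isLeast_sup_eq_sup_self hSD (hlt j hj) (hle_b j hj) (hnle_b j hj)
  ext x
  constructor
  · rintro ⟨z, hz, hx⟩
    obtain ⟨_, ⟨j, hj, rfl⟩, hzκ⟩ : ∃ k ∈ κ '' D, ¬ z ≤ k := by
      by_contra! hz_low
      exact hz.lt.not_ge (hb.2 hz_low)
    have hjz : j ≤ z := by
      by_contra hjz
      exact hzκ (hle_κ j hj z ((hle_b j hj).trans hz.le) hjz)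
    have hz_eq : b ⊔ j = z := (hz.eq_or_eq le_sup_left (sup_le hz.le hjz)).resolve_left
      fun h => hnle_b j hj (le_sup_right.trans h.le)
    rw [← hz_eq] at hx
    exact (hlabel j hj).unique hx ▸ hj
  · intro hx
    refine ⟨b ⊔ x, ⟨left_lt_sup.2 (hnle_b x hx), fun c hbc hcx => ?_⟩, hlabel x hx⟩
    have hxc : ¬ x ≤ c := fun hle => hcx.not_ge (sup_le hbc.le hle)
    refine hbc.not_ge (hb.2 ?_)
    rintro _ ⟨j, hj, rfl⟩
    obtain rfl | hne := eq_or_ne x j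
    · exact hle_κ x hx c ((hle_b x hx).trans hbc.le) hxc
    · exact hcx.le.trans (sup_le (hb_le j hj) ((hsep x hx j hj hne).trans (hwκ j hj)))

theorem exists_upJLabels_eq_downJLabels [Finite L] (hSD₁ : JoinSemidistrib L)
    (hSD₂ : MeetSemidistrib L) (a : L) : ∃ b, upJLabels b = downJLabels a := by
  have : Nonempty L := ⟨a⟩
  choose! w hw using fun j (hj : j ∈ downJLabels a) => hj
  choose κ hκ using fun j => exists_isGreatest_inf_eq hSD₂ j (w j)
  obtain ⟨b, hb⟩ := Finite.exists_isGLB (κ '' downJLabels a)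
  refine ⟨b, upJLabels_eq_of_isGLB hSD₁
    (fun j hj _ => (hw j hj).2.le_of_lt_of_sup_eq (hw j hj).1)
    (fun j hj => (hw j hj).2.not_le_of_sup_eq (hw j hj).1.lt) ?_ (fun j _ => hκ j) hb⟩
  intro j hj j' hj' hne
  refine (hw j hj).2.2 ((hw j hj).1.wcovBy.sup_eq (hw j' hj').1.wcovBy fun he => hne ?_)
  exact (hw j hj).2.unique (he ▸ (hw j' hj').2)

end Rowmotion

/-- In a finite semidistributive lattice, the collection of downward label sets
equals the collection of upward label sets, and rowmotion — sending `a` to the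
unique `b` with `D_J(a) = U_J(b)` — is well defined. -/
theorem semidistrib_rowmotion_well_defined {L : Type*} [Lattice L] [Fintype L]
    (hSD₁ : ∀ x y z : L, x ⊔ y = x ⊔ z → x ⊔ (y ⊓ z) = x ⊔ y)
    (hSD₂ : ∀ x y z : L, x ⊓ y = x ⊓ z → x ⊓ (y ⊔ z) = x ⊓ y) :
    Set.range (downJLabels (L := L)) = Set.range (upJLabels (L := L)) ∧
    ∀ a : L, ∃! b : L, downJLabels a = upJLabels b := by
  choose row hrow using exists_upJLabels_eq_downJLabels hSD₁ hSD₂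
  have hrow_inj : Function.Injective row := fun x y h =>
    downJLabels_injective hSD₁ (by rw [← hrow x, ← hrow y, h])
  have hdown : downJLabels = upJLabels ∘ row := funext fun a => (hrow a).symm
  refine ⟨by rw [hdown, (Finite.injective_iff_surjective.1 hrow_inj).range_comp], fun a => ?_⟩
  exact ⟨row a, (hrow a).symm,
    fun b hb => upJLabels_injective hSD₁ hSD₂ (hb.symm.trans (hrow a).symm)⟩
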